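/- For ℓ > 2, ∫_{a(ℓ)}^{b(ℓ)} 1/((ℓ-k)²+1) · 1/(k²+1) dk = 2·(f(ℓ) + g(ℓ))/((ℓ²+4)·ℓ), where a(ℓ) = (ℓ-√(ℓ²-4))/2, b(ℓ) = (ℓ+√(ℓ²-4))/2, f(ℓ) = ℓ·(arctan(b(ℓ)) - arctan(a(ℓ))), and g(ℓ) = ln(ℓ+√(ℓ²-4)) - ln(ℓ-√(ℓ²-4)). -/

import Mathlib

/-!
Partial fractions,
`1 / (((ℓ - k)² + 1)(k² + 1)) = ((2k + ℓ)/(k² + 1) + (3ℓ - 2k)/((ℓ - k)² + 1)) / (ℓ(ℓ² + 4))`,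
give the log-plus-arctan primitive `F = lorentzProductPrimitive ℓ` for every `ℓ ≠ 0`. The endpoints `a`, `b` satisfy
`a + b = ℓ` and `ab = 1`, so at them `k² + 1 = ℓk` and `ℓ - k` is the other endpoint; hence
`F b - F a` collapses to the arctangent and logarithm terms of the claim.
-/

open Real

noncomputable def lorentzProductPrimitive (l k : ℝ) : ℝ :=
  (log (k ^ 2 + 1) - log ((l - k) ^ 2 + 1) + l * (arctan k + arctan (k - l))) / (l * (l ^ 2 + 4))

lemma hasDerivAt_lorentzProductPrimitive {l : ℝ} (hl : l ≠ 0) (x : ℝ) :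
    HasDerivAt (lorentzProductPrimitive l) (1 / ((l - x) ^ 2 + 1) * (1 / (x ^ 2 + 1))) x := by
  have hx : x ^ 2 + 1 ≠ 0 := by positivity
  have hlx : (l - x) ^ 2 + 1 ≠ 0 := by positivity
  have hlog : HasDerivAt (fun k : ℝ => log (k ^ 2 + 1)) (2 * x / (x ^ 2 + 1)) x := by
    simpa using ((hasDerivAt_pow 2 x).add_const 1).log hx
  have hlog_sub : HasDerivAt (fun k : ℝ => log ((l - k) ^ 2 + 1))
      (2 * (l - x) * (-1) / ((l - x) ^ 2 + 1)) x := by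
    have h : HasDerivAt (fun k : ℝ => (l - k) ^ 2 + 1) (2 * (l - x) * (-1)) x := by
      simpa using (((hasDerivAt_id x).const_sub l).pow 2).add_const 1
    exact h.log hlx
  have harctan_sub : HasDerivAt (fun k : ℝ => arctan (k - l)) (1 / (1 + (x - l) ^ 2)) x := by
    simpa [Function.comp_def] using
      (hasDerivAt_arctan (x - l)).comp x ((hasDerivAt_id x).sub_const l)
  refine (((hlog.sub hlog_sub).add (((hasDerivAt_arctan x).add harctan_sub).const_mul l)).div_const
    (l * (l ^ 2 + 4))).congr_deriv ?_
  have hx' : 1 + x ^ 2 ≠ 0 := by positivity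
  have hxl' : 1 + (x - l) ^ 2 ≠ 0 := by positivity
  field_simp
  ring

lemma integral_lorentz_mul_lorentz {l : ℝ} (hl : l ≠ 0) (a b : ℝ) :
    ∫ k in a..b, 1 / ((l - k) ^ 2 + 1) * (1 / (k ^ 2 + 1)) =
      lorentzProductPrimitive l b - lorentzProductPrimitive l a := by
  have hcont : Continuous fun k : ℝ => 1 / ((l - k) ^ 2 + 1) * (1 / (k ^ 2 + 1)) := by
    apply Continuous.mul <;> exact continuous_const.div (by fun_prop) fun k => by positivity
  exact intervalIntegral.integral_eq_sub_of_hasDerivAt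
    (fun x _ => hasDerivAt_lorentzProductPrimitive hl x) (hcont.intervalIntegrable a b)

lemma lorentzProductPrimitive_sub_of_vieta {l a b : ℝ} (ha : 0 < a) (hb : 0 < b)
    (hsum : a + b = l) (hprod : a * b = 1) :
    lorentzProductPrimitive l b - lorentzProductPrimitive l a =
      2 * (l * (arctan b - arctan a) + (log b - log a)) / ((l ^ 2 + 4) * l) := by
  have hl : 0 < l := by linarith
  have ha2 : a ^ 2 + 1 = l * a := by rw [← hsum]; linear_combination -hprod
  have hb2 : b ^ 2 + 1 = l * b := by rw [← hsum]; linear_combination -hprod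
  have hla : l - a = b := by linarith
  have hlb : l - b = a := by linarith
  have hal : a - l = -b := by linarith
  have hbl : b - l = -a := by linarith
  simp only [lorentzProductPrimitive, hla, hlb, hal, hbl, ha2, hb2, arctan_neg,
    log_mul hl.ne' ha.ne', log_mul hl.ne' hb.ne']
  field_simp
  ring

theorem stmt_12 (l : ℝ) (hl : 2 < l) :
    ∫ k in ((l - Real.sqrt (l ^ 2 - 4)) / 2)..((l + Real.sqrt (l ^ 2 - 4)) / 2),
        1 / ((l - k) ^ 2 + 1) * (1 / (k ^ 2 + 1)) =
      2 * ((l * (Real.arctan ((l + Real.sqrt (l ^ 2 - 4)) / 2) -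
              Real.arctan ((l - Real.sqrt (l ^ 2 - 4)) / 2))) +
            (Real.log (l + Real.sqrt (l ^ 2 - 4)) - Real.log (l - Real.sqrt (l ^ 2 - 4)))) /
        ((l ^ 2 + 4) * l) := by
  set s := sqrt (l ^ 2 - 4)
  have hs2 : s ^ 2 = l ^ 2 - 4 := sq_sqrt (by nlinarith)
  have hsl : s < l := by nlinarith [sqrt_nonneg (l ^ 2 - 4)]
  have ha : 0 < (l - s) / 2 := by linarith
  have hb : 0 < (l + s) / 2 := by linarith [sqrt_nonneg (l ^ 2 - 4)]
  have hlog : log (l + s) - log (l - s) = log ((l + s) / 2) - log ((l - s) / 2) := by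
    rw [log_div (by linarith) two_ne_zero, log_div (by linarith) two_ne_zero]
    ring
  rw [integral_lorentz_mul_lorentz (by positivity), hlog,
    lorentzProductPrimitive_sub_of_vieta ha hb (by ring) (by linear_combination -hs2 / 4)]
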